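/- (One-step nonconvex descent) Under the assumptions of the nonconvex setting, for step size α ≤ θ₁/(θ₂²ηΛ): E[f(ω_{t+1}) | ω_t] ≤ f(ω_t) - (αθ₁/2)‖∇f(ω_t)‖² + (α²θ₂²Λγ²)/2. -/

import Mathlib

/-!
Applied with `v = -α H g`, the descent lemma `f (x + v) ≤ f x + ⟪∇f x, v⟫ + Λ/2 ‖v‖²` bounds every
outcome of the step. Averaging over the noise, unbiasedness turns the linear term into
`-α ⟪∇f, H ∇f⟫ ≤ -α θ₁ ‖∇f‖²`, while `‖H‖ ≤ θ₂` and the second-moment bound control the quadratic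
term by `Λ α² θ₂² (γ² + η ‖∇f‖²) / 2`. The step-size condition makes its `η`-part at most half of
the descent term.
-/

open RealInnerProductSpace Finset

section Smooth

variable {E : Type*} [NormedAddCommGroup E] [InnerProductSpace ℝ E] [CompleteSpace E]
  {f : E → ℝ} {Λ : ℝ}

theorem hasDerivAt_comp_add_smul (hf : Differentiable ℝ f) (x v : E) (t : ℝ) :
    HasDerivAt (fun s : ℝ => f (x + s • v)) ⟪gradient f (x + t • v), v⟫ t := by
  have hline : HasDerivAt (fun s : ℝ => x + s • v) v t := by
    simpa using ((hasDerivAt_id t).smul_const v).const_add x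
  have h := (hf (x + t • v)).hasGradientAt.hasFDerivAt.comp_hasDerivAt t hline
  rwa [InnerProductSpace.toDual_apply_apply] at h

theorem le_add_inner_gradient_add_sq (hf : Differentiable ℝ f)
    (hlip : ∀ x y : E, ‖gradient f y - gradient f x‖ ≤ Λ * ‖y - x‖) (x v : E) :
    f (x + v) ≤ f x + ⟪gradient f x, v⟫ + Λ / 2 * ‖v‖ ^ 2 := by
  set φ : ℝ → ℝ := fun t => f (x + t • v) - t * ⟪gradient f x, v⟫ - Λ / 2 * t ^ 2 * ‖v‖ ^ 2
  have hφ' (t : ℝ) :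
      HasDerivAt φ (⟪gradient f (x + t • v) - gradient f x, v⟫ - Λ * t * ‖v‖ ^ 2) t := by
    refine (((hasDerivAt_comp_add_smul hf x v t).sub ((hasDerivAt_id t).mul_const _)).sub
      (((hasDerivAt_pow 2 t).const_mul (Λ / 2)).mul_const (‖v‖ ^ 2))).congr_deriv ?_
    rw [inner_sub_left]; simp only [Nat.cast_ofNat]; ring
  have hanti : AntitoneOn φ (Set.Icc 0 1) := by
    refine antitoneOn_of_hasDerivWithinAt_nonpos (convex_Icc 0 1)
      (HasDerivAt.continuousOn fun t _ => hφ' t) (fun t _ => (hφ' t).hasDerivWithinAt) ?_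
    intro t ht
    rw [interior_Icc] at ht
    have : ⟪gradient f (x + t • v) - gradient f x, v⟫ ≤ Λ * t * ‖v‖ ^ 2 :=
      calc _ ≤ ‖gradient f (x + t • v) - gradient f x‖ * ‖v‖ := real_inner_le_norm _ _
        _ ≤ Λ * ‖t • v‖ * ‖v‖ := by gcongr; simpa using hlip x (x + t • v)
        _ = Λ * t * ‖v‖ ^ 2 := by rw [norm_smul, Real.norm_of_nonneg ht.1.le]; ring
    linarith
  have := hanti (Set.left_mem_Icc.2 zero_le_one) (Set.right_mem_Icc.2 zero_le_one) zero_le_one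
  simp only [φ, zero_smul, add_zero, one_smul, zero_mul, one_mul, sub_zero, one_pow, mul_one,
    ne_eq, OfNat.ofNat_ne_zero, not_false_eq_true, zero_pow, mul_zero] at this
  linarith

theorem le_sub_smul_inner_gradient_add_sq (hf : Differentiable ℝ f)
    (hlip : ∀ x y : E, ‖gradient f y - gradient f x‖ ≤ Λ * ‖y - x‖) (hΛ : 0 ≤ Λ)
    {H : E →L[ℝ] E} {θ : ℝ} (hH : ‖H‖ ≤ θ) (α : ℝ) (x u : E) :
    f (x - α • H u) ≤ f x - α * ⟪gradient f x, H u⟫ + Λ / 2 * α ^ 2 * θ ^ 2 * ‖u‖ ^ 2 := by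
  calc f (x - α • H u) ≤ f x + ⟪gradient f x, -(α • H u)⟫ + Λ / 2 * ‖-(α • H u)‖ ^ 2 := by
        simpa only [sub_eq_add_neg] using le_add_inner_gradient_add_sq hf hlip x (-(α • H u))
    _ = f x - α * ⟪gradient f x, H u⟫ + Λ / 2 * α ^ 2 * ‖H u‖ ^ 2 := by
        rw [inner_neg_right, real_inner_smul_right, norm_neg, norm_smul, mul_pow,
          Real.norm_eq_abs, sq_abs]
        ring
    _ ≤ f x - α * ⟪gradient f x, H u⟫ + Λ / 2 * α ^ 2 * (θ * ‖u‖) ^ 2 := by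
        gcongr; exact H.le_of_opNorm_le hH u
    _ = f x - α * ⟪gradient f x, H u⟫ + Λ / 2 * α ^ 2 * θ ^ 2 * ‖u‖ ^ 2 := by ring

end Smooth

namespace ContinuousLinearMap

variable {𝕜 E : Type*} [RCLike 𝕜] [NormedAddCommGroup E] [InnerProductSpace 𝕜 E]

theorem opNorm_le_of_abs_re_inner_self_le {T : E →L[𝕜] E} (hT : (T : E →ₗ[𝕜] E).IsSymmetric)
    {c : ℝ} (hc : 0 ≤ c) (h : ∀ x, |RCLike.re (inner 𝕜 (T x) x)| ≤ c * ‖x‖ ^ 2) : ‖T‖ ≤ c := by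
  rw [T.norm_eq_iSup_rayleighQuotient hT]
  refine ciSup_le fun x => ?_
  rw [rayleighQuotient, reApplyInnerSelf_apply, abs_div, abs_sq]
  exact div_le_of_le_mul₀ (sq_nonneg _) hc (h x)

end ContinuousLinearMap

theorem stmt8_general {d : ℕ} {Ω : Type*} [Fintype Ω]
    (p : Ω → ℝ) (hp : ∀ x, 0 ≤ p x) (hp1 : ∑ x, p x = 1)
    (f : EuclideanSpace ℝ (Fin d) → ℝ) (Λ θ₁ θ₂ γ η α : ℝ)
    (hf : Differentiable ℝ f)
    (hlip : ∀ ω ω' : EuclideanSpace ℝ (Fin d),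
      ‖gradient f ω' - gradient f ω‖ ≤ Λ * ‖ω' - ω‖)
    (hΛ : 0 < Λ) (hθ1 : 0 < θ₁) (hθ12 : θ₁ ≤ θ₂)
    (hα0 : 0 < α) (hα1 : α ≤ θ₁ / (θ₂ ^ 2 * η * Λ))
    (H : EuclideanSpace ℝ (Fin d) →L[ℝ] EuclideanSpace ℝ (Fin d))
    (hHsa : IsSelfAdjoint H)
    (hH : ∀ v, θ₁ * ‖v‖ ^ 2 ≤ ⟪v, H v⟫ ∧ ⟪v, H v⟫ ≤ θ₂ * ‖v‖ ^ 2)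
    (ω : EuclideanSpace ℝ (Fin d)) (g : Ω → EuclideanSpace ℝ (Fin d))
    (hunb : ∑ x, p x • g x = gradient f ω)
    (hmom : ∑ x, p x * ‖g x‖ ^ 2 ≤ γ ^ 2 + η * ‖gradient f ω‖ ^ 2) :
    ∑ x, p x * f (ω - α • H (g x)) ≤
      f ω - α * θ₁ / 2 * ‖gradient f ω‖ ^ 2 + α ^ 2 * θ₂ ^ 2 * Λ * γ ^ 2 / 2 := by
  have hHθ₂ : ‖H‖ ≤ θ₂ := H.opNorm_le_of_abs_re_inner_self_le hHsa.isSymmetric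
    (hθ1.le.trans hθ12) fun v => by
      have hpos : 0 ≤ ⟪v, H v⟫ := (hH v).1.trans' (by positivity)
      rw [RCLike.re_to_real, real_inner_comm, abs_of_nonneg hpos]
      exact (hH v).2
  have hstep : α * (θ₂ ^ 2 * η * Λ) ≤ θ₁ :=
    (le_div_iff₀ ((div_pos_iff_of_pos_left hθ1).1 (hα0.trans_le hα1))).1 hα1
  have hmean : ∑ x, p x * ⟪gradient f ω, H (g x)⟫ = ⟪gradient f ω, H (gradient f ω)⟫ := by
    simp only [← hunb, map_sum, map_smul, inner_sum, real_inner_smul_right]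
  calc ∑ x, p x * f (ω - α • H (g x))
      ≤ ∑ x, p x * (f ω - α * ⟪gradient f ω, H (g x)⟫
          + Λ / 2 * α ^ 2 * θ₂ ^ 2 * ‖g x‖ ^ 2) :=
        sum_le_sum fun x _ => mul_le_mul_of_nonneg_left
          (le_sub_smul_inner_gradient_add_sq hf hlip hΛ.le hHθ₂ α ω (g x)) (hp x)
    _ = f ω - α * ⟪gradient f ω, H (gradient f ω)⟫
          + Λ / 2 * α ^ 2 * θ₂ ^ 2 * ∑ x, p x * ‖g x‖ ^ 2 := by
        simp only [mul_add, mul_sub, sum_add_distrib, sum_sub_distrib, ← sum_mul, hp1, one_mul,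
          ← hmean, mul_sum, mul_left_comm (p _)]
    _ ≤ f ω - α * θ₁ / 2 * ‖gradient f ω‖ ^ 2 + α ^ 2 * θ₂ ^ 2 * Λ * γ ^ 2 / 2 := by
        linear_combination α * (hH (gradient f ω)).1 + (Λ / 2 * α ^ 2 * θ₂ ^ 2) * hmom
          + (α * ‖gradient f ω‖ ^ 2 / 2) * hstep

/-- One-step nonconvex descent: for `f` Λ-smooth, `θ₁ I ⪯ H ⪯ θ₂ I`, `E[g] = ∇f(ω)`,
`E‖g‖² ≤ γ² + η‖∇f(ω)‖²` and `α ∈ (0, θ₁/(θ₂²ηΛ)]`: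
`E[f(ω - αHg)] ≤ f(ω) - (αθ₁/2)‖∇f(ω)‖² + α²θ₂²Λγ²/2`. -/
theorem stmt8 {d : ℕ} {Ω : Type*} [Fintype Ω]
    (p : Ω → ℝ) (hp : ∀ x, 0 ≤ p x) (hp1 : ∑ x, p x = 1)
    (f : EuclideanSpace ℝ (Fin d) → ℝ) (Λ θ₁ θ₂ γ η α : ℝ)
    (hf : Differentiable ℝ f)
    (hlip : ∀ ω ω' : EuclideanSpace ℝ (Fin d),
      ‖gradient f ω' - gradient f ω‖ ≤ Λ * ‖ω' - ω‖)
    (hΛ : 0 < Λ) (hθ1 : 0 < θ₁) (hθ12 : θ₁ ≤ θ₂) (hγ : 0 ≤ γ) (hη : 0 < η)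
    (hα0 : 0 < α) (hα1 : α ≤ θ₁ / (θ₂ ^ 2 * η * Λ))
    (H : EuclideanSpace ℝ (Fin d) →L[ℝ] EuclideanSpace ℝ (Fin d))
    (hHsa : IsSelfAdjoint H)
    (hH : ∀ v, θ₁ * ‖v‖ ^ 2 ≤ ⟪v, H v⟫ ∧ ⟪v, H v⟫ ≤ θ₂ * ‖v‖ ^ 2)
    (ω : EuclideanSpace ℝ (Fin d)) (g : Ω → EuclideanSpace ℝ (Fin d))
    (hunb : ∑ x, p x • g x = gradient f ω)
    (hmom : ∑ x, p x * ‖g x‖ ^ 2 ≤ γ ^ 2 + η * ‖gradient f ω‖ ^ 2) :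
    ∑ x, p x * f (ω - α • H (g x)) ≤
      f ω - α * θ₁ / 2 * ‖gradient f ω‖ ^ 2 + α ^ 2 * θ₂ ^ 2 * Λ * γ ^ 2 / 2 :=
  stmt8_general p hp hp1 f Λ θ₁ θ₂ γ η α hf hlip hΛ hθ1 hθ12 hα0 hα1 H hHsa hH ω g hunb hmom
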